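/- There exists a constant A > 1 such that for all n ≥ 1: A^{−1}·φ^{−2n} ≤ P(b_n = 1) ≤ A·φ^{−2n}, and for every integer j > 1, P(b_n ≤ j) ≤ A·C(n+j−1, j−1)·φ^{−2n}, where φ = (√5 + 1)/2 and C(·,·) denotes the binomial coefficient. -/

import Mathlib

open MeasureTheory Set

/-- The Engel continued fraction map, with the convention `T_E 0 = 0`. -/
noncomputable def ecfT (x : ℝ) : ℝ :=
  if x = 0 then 0 else (1 / (⌊1 / x⌋ : ℝ)) * (1 / x - (⌊1 / x⌋ : ℝ))

/-- The `n`-th partial quotient of the ECF expansion (`n ≥ 1`). -/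
noncomputable def ecfB (n : ℕ) (x : ℝ) : ℤ := ⌊1 / (ecfT^[n - 1] x)⌋

/-- Lebesgue measure on `(0,1]`. -/
noncomputable def ecfP : Measure ℝ := volume.restrict (Set.Ioc 0 1)


/-!
Off a null set of rational points the digits satisfy `1 ≤ b_1 ≤ ⋯ ≤ b_n`, and the points with
digits `c_1, …, c_n` lie in the image of `[0, 1]` under the composite inverse branch
`t ↦ (c_1 (⋯ (c_n (t + 1))⁻¹ ⋯ + 1))⁻¹`. This is the Möbius map of the matrix
`∏ !![0, 1; c_i, c_i]`, of determinant `±∏ c_i`, so its image has length at most `∏ c_i / D²`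
with `D` the bottom-right entry. Appending digits one at a time gives `φ^{2n} ∏ c_i ≤ φ² D²`,
so each such image has measure at most `φ² φ^{-2n}`. The event `b_n = 1` is, up to endpoints,
the image for the word `1, …, 1`, whose matrix has Fibonacci entries, at most `φ^{n+1}`; this
gives the lower bound. The event `b_n ≤ j` is covered by the images for the nondecreasing words
in `[1, j]`, and there are `C(n + j - 1, n)` of those.
-/

open Real
open scoped goldenRatio

lemma ecfT_eq_fract_div (x : ℝ) : ecfT x = Int.fract (1 / x) / ⌊1 / x⌋ := by
  unfold ecfT Int.fract
  split_ifs with hx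
  · simp [hx]
  · ring

lemma ecfT_zero : ecfT 0 = 0 := by simp [ecfT]

lemma one_le_floor_one_div {x : ℝ} (hx : x ∈ Ioc 0 1) : 1 ≤ ⌊1 / x⌋ := by
  rw [Int.le_floor, Int.cast_one, le_div_iff₀ hx.1, one_mul]
  exact hx.2

lemma ecfT_mem_Ico {x : ℝ} (hx : x ∈ Ioc 0 1) : ecfT x ∈ Ico 0 (1 / (⌊1 / x⌋ : ℝ)) := by
  have hb : (0 : ℝ) < ⌊1 / x⌋ := by exact_mod_cast one_le_floor_one_div hx
  rw [ecfT_eq_fract_div]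
  exact ⟨div_nonneg (Int.fract_nonneg _) hb.le, div_lt_div_of_pos_right (Int.fract_lt_one _) hb⟩

lemma mapsTo_ecfT : MapsTo ecfT (Icc 0 1) (Icc 0 1) := by
  intro x hx
  rcases hx.1.eq_or_lt with rfl | hx0
  · simp [ecfT_zero]
  have hT := ecfT_mem_Ico ⟨hx0, hx.2⟩
  have hb : (1 : ℝ) ≤ ⌊1 / x⌋ := by exact_mod_cast one_le_floor_one_div ⟨hx0, hx.2⟩
  exact ⟨hT.1, hT.2.le.trans (div_le_one_of_le₀ hb (by positivity))⟩

lemma floor_one_div_mul_ecfT_add_one {x : ℝ} (hx : ⌊1 / x⌋ ≠ 0) :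
    (⌊1 / x⌋ : ℝ) * (ecfT x + 1) = 1 / x := by
  rw [ecfT_eq_fract_div, Int.fract]
  field_simp
  ring

lemma floor_one_div_and_ecfT_of_eq_inv {c : ℤ} (hc : 1 ≤ c) {u : ℝ} (hu : u ∈ Ico 0 (1 / (c : ℝ))) :
    ⌊1 / ((c : ℝ) * (u + 1))⁻¹⌋ = c ∧ ecfT ((c : ℝ) * (u + 1))⁻¹ = u := by
  have hc' : (0 : ℝ) < c := by exact_mod_cast hc
  have hcu : c * u ∈ Ico (0 : ℝ) 1 :=
    ⟨mul_nonneg hc'.le hu.1, by rw [← lt_div_iff₀' hc']; exact hu.2⟩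
  have hinv : 1 / ((c : ℝ) * (u + 1))⁻¹ = c * u + c := by rw [one_div, inv_inv]; ring
  have hfloor : ⌊(c : ℝ) * u + c⌋ = c := by
    rw [Int.floor_add_intCast, Int.floor_eq_zero_iff.2 hcu, zero_add]
  refine ⟨hinv ▸ hfloor, ?_⟩
  rw [ecfT_eq_fract_div, hinv, hfloor, Int.fract_add_intCast, Int.fract_eq_self.2 hcu]
  field_simp

lemma floor_one_div_le_floor_one_div_ecfT {x : ℝ} (hx : x ∈ Ioc 0 1) (hT : ecfT x ≠ 0) :
    ⌊1 / x⌋ ≤ ⌊1 / ecfT x⌋ := by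
  have hT' := ecfT_mem_Ico hx
  have hTpos : 0 < ecfT x := lt_of_le_of_ne hT'.1 (Ne.symm hT)
  have hb : (0 : ℝ) < ⌊1 / x⌋ := by exact_mod_cast one_le_floor_one_div hx
  rw [Int.le_floor, le_div_iff₀ hTpos]
  have := hT'.2
  rw [lt_div_iff₀ hb] at this
  linarith

lemma iterate_ecfT_ne_zero_of_le {x : ℝ} {k m : ℕ} (hkm : k ≤ m) (hm : ecfT^[m] x ≠ 0) :
    ecfT^[k] x ≠ 0 := by
  obtain ⟨d, rfl⟩ := Nat.exists_eq_add_of_le hkm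
  intro hk
  rw [add_comm, Function.iterate_add_apply, hk, Function.iterate_fixed ecfT_zero] at hm
  exact hm rfl

lemma iterate_ecfT_mem_Ioc {x : ℝ} (hx : x ∈ Icc 0 1) {k : ℕ} (hk : ecfT^[k] x ≠ 0) :
    ecfT^[k] x ∈ Ioc 0 1 :=
  have h := mapsTo_ecfT.iterate k hx
  ⟨lt_of_le_of_ne h.1 (Ne.symm hk), h.2⟩

lemma floor_one_div_iterate_ecfT_mono {x : ℝ} (hx : x ∈ Icc 0 1) {k m : ℕ} (hkm : k ≤ m)
    (hm : ecfT^[m] x ≠ 0) : ⌊1 / ecfT^[k] x⌋ ≤ ⌊1 / ecfT^[m] x⌋ := by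
  induction m, hkm using Nat.le_induction with
  | base => rfl
  | succ m hkm ih =>
    have hm' : ecfT^[m] x ≠ 0 := iterate_ecfT_ne_zero_of_le m.le_succ hm
    refine (ih hm').trans ?_
    rw [Function.iterate_succ_apply'] at hm ⊢
    exact floor_one_div_le_floor_one_div_ecfT (iterate_ecfT_mem_Ioc hx hm') hm

lemma ecfB_succ (k : ℕ) (x : ℝ) : ecfB (k + 1) x = ⌊1 / ecfT^[k] x⌋ := rfl

noncomputable def ecfDigits (n : ℕ) (x : ℝ) : List ℤ := List.ofFn fun i : Fin n => ecfB (i + 1) x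

lemma ecfDigits_succ (n : ℕ) (x : ℝ) : ecfDigits (n + 1) x = ⌊1 / x⌋ :: ecfDigits n (ecfT x) := by
  simp [ecfDigits, List.ofFn_succ, ecfB_succ, Function.iterate_succ_apply]

lemma ecfB_mem_ecfDigits {n : ℕ} (hn : 1 ≤ n) (x : ℝ) : ecfB n x ∈ ecfDigits n x := by
  obtain ⟨m, rfl⟩ := Nat.exists_eq_add_of_le' hn
  exact List.mem_ofFn.2 ⟨Fin.last m, rfl⟩

section
variable {x : ℝ} {n : ℕ}

lemma mem_Icc_of_mem_ecfDigits (hx : x ∈ Icc 0 1) (hn : ecfT^[n - 1] x ≠ 0) {c : ℤ}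
    (hc : c ∈ ecfDigits n x) : c ∈ Icc 1 (ecfB n x) := by
  obtain ⟨i, rfl⟩ := List.mem_ofFn.1 hc
  have hi : (i : ℕ) ≤ n - 1 := by omega
  exact ⟨one_le_floor_one_div (iterate_ecfT_mem_Ioc hx (iterate_ecfT_ne_zero_of_le hi hn)),
    floor_one_div_iterate_ecfT_mono hx hi hn⟩

lemma pairwise_le_ecfDigits (hx : x ∈ Icc 0 1) (hn : ecfT^[n - 1] x ≠ 0) :
    (ecfDigits n x).Pairwise (· ≤ ·) :=
  List.pairwise_ofFn.2 fun i j hij =>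
    floor_one_div_iterate_ecfT_mono hx hij.le (iterate_ecfT_ne_zero_of_le (by omega) hn)

lemma ecfDigits_eq_replicate_of_ecfB_eq_one (hx : x ∈ Icc 0 1) (h : ecfB n x = 1) :
    ecfDigits n x = List.replicate n 1 := by
  have hn : ecfT^[n - 1] x ≠ 0 := fun h0 => by simp [ecfB, h0] at h
  refine List.eq_replicate_iff.2 ⟨List.length_ofFn, fun c hc => ?_⟩
  obtain ⟨h1, h2⟩ := mem_Icc_of_mem_ecfDigits hx hn hc
  omega

end

/-- The inverse branch of `ecfT^[l.length]` on the points whose first digits are `l`. -/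
noncomputable def ecfBranch : List ℤ → ℝ → ℝ
  | [], t => t
  | c :: l, t => ((c : ℝ) * (ecfBranch l t + 1))⁻¹

lemma mem_image_ecfBranch_ecfDigits {n : ℕ} {x : ℝ} (hx : x ∈ Icc 0 1)
    (h : ∀ c ∈ ecfDigits n x, 1 ≤ c) : x ∈ ecfBranch (ecfDigits n x) '' Icc 0 1 := by
  induction n generalizing x with
  | zero => exact ⟨x, hx, rfl⟩
  | succ n ih =>
    rw [ecfDigits_succ] at h ⊢
    have hb : 1 ≤ ⌊1 / x⌋ := h _ List.mem_cons_self
    obtain ⟨t, ht, hTt⟩ := ih (mapsTo_ecfT hx) fun c hc => h c (List.mem_cons_of_mem _ hc)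
    refine ⟨t, ht, ?_⟩
    rw [ecfBranch, hTt, floor_one_div_mul_ecfT_add_one (by omega), one_div, inv_inv]

lemma ecfBranch_replicate_one {t : ℝ} (ht : t ∈ Ioo 0 1) (n : ℕ) :
    ecfBranch (List.replicate n 1) t ∈ Ioo 0 1 ∧
      ecfDigits n (ecfBranch (List.replicate n 1) t) = List.replicate n 1 := by
  induction n with
  | zero => exact ⟨ht, rfl⟩
  | succ n ih =>
    obtain ⟨⟨hu0, hu1⟩, hdig⟩ := ih
    obtain ⟨hfloor, hT⟩ := floor_one_div_and_ecfT_of_eq_inv le_rfl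
      (u := ecfBranch (List.replicate n 1) t) ⟨hu0.le, by simpa using hu1⟩
    rw [List.replicate_succ, ecfBranch, ecfDigits_succ]
    refine ⟨⟨by positivity, ?_⟩, by rw [hfloor, hT, hdig]⟩
    rw [Int.cast_one, one_mul]
    exact inv_lt_one_of_one_lt₀ (by linarith)

/-- The matrix of the Möbius map `t ↦ 1 / (c t + c)`, i.e. of `ecfBranch [c]`. -/
def branchMatrix (c : ℤ) : Matrix (Fin 2) (Fin 2) ℤ := !![0, 1; c, c]

def wordMatrix (l : List ℤ) : Matrix (Fin 2) (Fin 2) ℤ := (l.map branchMatrix).prod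

lemma wordMatrix_cons (c : ℤ) (l : List ℤ) :
    wordMatrix (c :: l) = !![wordMatrix l 1 0, wordMatrix l 1 1;
      c * (wordMatrix l 0 0 + wordMatrix l 1 0), c * (wordMatrix l 0 1 + wordMatrix l 1 1)] := by
  rw [wordMatrix, List.map_cons, List.prod_cons, ← wordMatrix, branchMatrix,
    Matrix.eta_fin_two (wordMatrix l), Matrix.mul_fin_two]
  simp only [Matrix.of_apply, Matrix.cons_val_zero, Matrix.cons_val_one]
  congr 1; ring_nf

lemma wordMatrix_append_singleton (l : List ℤ) (c : ℤ) :
    wordMatrix (l ++ [c]) = !![c * wordMatrix l 0 1, wordMatrix l 0 0 + c * wordMatrix l 0 1;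
      c * wordMatrix l 1 1, wordMatrix l 1 0 + c * wordMatrix l 1 1] := by
  rw [wordMatrix, List.map_append, List.prod_append, ← wordMatrix, List.map_singleton,
    List.prod_singleton, branchMatrix, Matrix.eta_fin_two (wordMatrix l), Matrix.mul_fin_two]
  simp only [Matrix.of_apply, Matrix.cons_val_zero, Matrix.cons_val_one]
  congr 1; ring_nf

lemma det_wordMatrix (l : List ℤ) : (wordMatrix l).det = (-1) ^ l.length * l.prod := by
  rw [wordMatrix, ← Matrix.coe_detMonoidHom, map_list_prod, List.map_map]
  have : ⇑Matrix.detMonoidHom ∘ branchMatrix = Neg.neg := by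
    ext c; simp [branchMatrix, Matrix.det_fin_two_of]
  rw [this, List.prod_map_neg]

section
variable {l : List ℤ} (hl : ∀ c ∈ l, 1 ≤ c)
include hl

lemma wordMatrix_nonneg :
    0 ≤ wordMatrix l 0 0 ∧ 0 ≤ wordMatrix l 0 1 ∧ 0 ≤ wordMatrix l 1 0 ∧ 1 ≤ wordMatrix l 1 1 := by
  induction l with
  | nil => simp [wordMatrix]
  | cons c l ih =>
    obtain ⟨hA, hB, hC, hD⟩ := ih fun d hd => hl d (List.mem_cons_of_mem _ hd)
    have hc := hl c List.mem_cons_self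
    simp only [wordMatrix_cons, Matrix.of_apply, Matrix.cons_val_zero, Matrix.cons_val_one]
    refine ⟨hC, by omega, by positivity, by nlinarith⟩

lemma cast_prod_pos : (0 : ℝ) < l.prod := by
  exact_mod_cast List.prod_pos fun c hc => lt_of_lt_of_le one_pos (hl c hc)

lemma wordMatrix_den_pos {t : ℝ} (ht : 0 ≤ t) :
    0 < (wordMatrix l 1 0 : ℝ) * t + wordMatrix l 1 1 := by
  obtain ⟨-, -, hC, hD⟩ := wordMatrix_nonneg hl
  have hC : (0 : ℝ) ≤ wordMatrix l 1 0 := by exact_mod_cast hC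
  have hD : (1 : ℝ) ≤ wordMatrix l 1 1 := by exact_mod_cast hD
  nlinarith

lemma ecfBranch_eq_div {t : ℝ} (ht : 0 ≤ t) :
    ecfBranch l t = (wordMatrix l 0 0 * t + wordMatrix l 0 1) /
      (wordMatrix l 1 0 * t + wordMatrix l 1 1) := by
  induction l with
  | nil => simp [ecfBranch, wordMatrix]
  | cons c l ih =>
    have hden := wordMatrix_den_pos (fun d hd => hl d (List.mem_cons_of_mem _ hd)) ht
    rw [ecfBranch, ih fun d hd => hl d (List.mem_cons_of_mem _ hd), div_add_one hden.ne',
      mul_div_assoc', inv_div, wordMatrix_cons]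
    simp only [Matrix.of_apply, Matrix.cons_val_zero, Matrix.cons_val_one]
    push_cast
    ring_nf

lemma abs_ecfBranch_sub {t s : ℝ} (ht : 0 ≤ t) (hs : 0 ≤ s) :
    |ecfBranch l t - ecfBranch l s| = l.prod * |t - s| /
      ((wordMatrix l 1 0 * t + wordMatrix l 1 1) * (wordMatrix l 1 0 * s + wordMatrix l 1 1)) := by
  have hdt := wordMatrix_den_pos hl ht
  have hds := wordMatrix_den_pos hl hs
  have hdet : (wordMatrix l 0 0 * wordMatrix l 1 1 - wordMatrix l 0 1 * wordMatrix l 1 0 : ℝ) =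
      (-1) ^ l.length * l.prod := by
    exact_mod_cast (Matrix.det_fin_two _).symm.trans (det_wordMatrix l)
  have hP : (l.prod : ℝ) = |(-1) ^ l.length * (l.prod : ℝ)| := by
    rw [abs_mul, abs_neg_one_pow, one_mul, abs_of_pos (cast_prod_pos hl)]
  rw [ecfBranch_eq_div hl ht, ecfBranch_eq_div hl hs, div_sub_div _ _ hdt.ne' hds.ne', abs_div,
    abs_of_pos (mul_pos hdt hds), hP, ← hdet, ← abs_mul]
  congr 2
  ring

end

lemma goldenRatio_sq_mul_le {s : ℝ} (hs : 1 ≤ s) : φ ^ 2 * s ≤ 1 + s ^ 2 * φ := by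
  have h : 0 ≤ (s - 1) * (φ * s - 1) :=
    mul_nonneg (by linarith) (by nlinarith [one_lt_goldenRatio])
  nlinarith [goldenRatio_sq]

/-- The second inequality is what propagates the first one when a digit is appended. -/
lemma goldenRatio_pow_mul_sqrt_prod_le {l : List ℤ} (hl : ∀ c ∈ l, 1 ≤ c) :
    φ ^ l.length * √(l.prod : ℝ) ≤ φ * wordMatrix l 1 1 ∧
      (l ≠ [] → φ ^ l.length * √(l.prod : ℝ) ≤ φ ^ 2 * wordMatrix l 1 0) := by
  induction l using List.reverseRecOn with
  | nil => simp [wordMatrix, one_lt_goldenRatio.le]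
  | append_singleton l c ih =>
    have hl' : ∀ d ∈ l, 1 ≤ d := fun d hd => hl d (List.mem_append_left _ hd)
    obtain ⟨ihD, ihC⟩ := ih hl'
    have hc : (1 : ℝ) ≤ c := by exact_mod_cast hl c (by simp)
    have hsc : 1 ≤ √(c : ℝ) := Real.one_le_sqrt.2 hc
    have hsc' : √(c : ℝ) ≤ c := Real.sqrt_le_left (by linarith) |>.2 (by nlinarith)
    set X := φ ^ l.length * √(l.prod : ℝ)
    have hX : 0 ≤ X := by positivity
    have hX' : φ ^ (l ++ [c]).length * √((l ++ [c]).prod : ℝ) = φ * √(c : ℝ) * X := by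
      rw [List.length_append, List.length_singleton, List.prod_append, List.prod_singleton,
        Int.cast_mul, Real.sqrt_mul (cast_prod_pos hl').le, pow_succ]
      ring
    have hφ := goldenRatio_pos
    rw [hX', wordMatrix_append_singleton]
    simp only [Matrix.of_apply, Matrix.cons_val_zero, Matrix.cons_val_one]
    push_cast
    refine ⟨?_, fun _ => ?_⟩
    · rcases eq_or_ne l [] with rfl | hne
      · simpa [wordMatrix, X] using mul_le_mul_of_nonneg_left hsc' hφ.le
      have key := mul_le_mul_of_nonneg_left (goldenRatio_sq_mul_le hsc) hX
      rw [Real.sq_sqrt (by linarith)] at key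
      have hcD := mul_le_mul_of_nonneg_left ihD (by positivity : 0 ≤ φ * c)
      refine le_of_mul_le_mul_left ?_ hφ
      linarith [ihC hne]
    · have hcD := mul_le_mul_of_nonneg_left ihD (by positivity : 0 ≤ φ * c)
      have hsX := mul_le_mul_of_nonneg_left hsc' (by positivity : 0 ≤ φ * X)
      linarith

lemma goldenRatio_pow_mul_prod_le {l : List ℤ} (hl : ∀ c ∈ l, 1 ≤ c) :
    φ ^ (2 * l.length) * l.prod ≤ φ ^ 2 * (wordMatrix l 1 1 : ℝ) ^ 2 := by
  have h := (goldenRatio_pow_mul_sqrt_prod_le hl).1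
  have h0 : 0 ≤ φ ^ l.length * √(l.prod : ℝ) := by positivity
  calc φ ^ (2 * l.length) * l.prod = (φ ^ l.length * √(l.prod : ℝ)) ^ 2 := by
        rw [mul_pow, Real.sq_sqrt (cast_prod_pos hl).le, ← pow_mul, mul_comm l.length]
    _ ≤ (φ * wordMatrix l 1 1) ^ 2 := pow_le_pow_left₀ h0 h 2
    _ = φ ^ 2 * (wordMatrix l 1 1 : ℝ) ^ 2 := mul_pow _ _ _

lemma abs_ecfBranch_sub_le {l : List ℤ} (hl : ∀ c ∈ l, 1 ≤ c) {t s : ℝ} (ht : t ∈ Icc 0 1)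
    (hs : s ∈ Icc 0 1) : |ecfBranch l t - ecfBranch l s| ≤ φ ^ 2 * (φ ^ (2 * l.length))⁻¹ := by
  obtain ⟨-, -, hC, hD⟩ := wordMatrix_nonneg hl
  have hC : (0 : ℝ) ≤ wordMatrix l 1 0 := by exact_mod_cast hC
  have hD : (1 : ℝ) ≤ wordMatrix l 1 1 := by exact_mod_cast hD
  have hP := cast_prod_pos hl
  have hts : |t - s| ≤ 1 := abs_sub_le_iff.2 ⟨by linarith [ht.2, hs.1], by linarith [ht.1, hs.2]⟩
  have hden : (wordMatrix l 1 1 : ℝ) ^ 2 ≤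
      (wordMatrix l 1 0 * t + wordMatrix l 1 1) * (wordMatrix l 1 0 * s + wordMatrix l 1 1) := by
    rw [sq]
    gcongr <;> nlinarith [ht.1, hs.1]
  rw [abs_ecfBranch_sub hl ht.1 hs.1]
  calc (l.prod : ℝ) * |t - s| / _ ≤ l.prod / (wordMatrix l 1 1 : ℝ) ^ 2 := by
        gcongr
        · exact mul_le_of_le_one_right hP.le hts
    _ ≤ φ ^ 2 * (φ ^ (2 * l.length))⁻¹ := by
        rw [div_le_iff₀ (by positivity), mul_comm (φ ^ 2), mul_assoc,
          le_inv_mul_iff₀ (by positivity)]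
        exact goldenRatio_pow_mul_prod_le hl

lemma volume_image_ecfBranch_le {l : List ℤ} (hl : ∀ c ∈ l, 1 ≤ c) :
    volume (ecfBranch l '' Icc 0 1) ≤ ENNReal.ofReal (φ ^ 2 * (φ ^ (2 * l.length))⁻¹) := by
  refine (Real.volume_le_diam _).trans (Metric.ediam_le ?_)
  rintro _ ⟨t, ht, rfl⟩ _ ⟨s, hs, rfl⟩
  rw [edist_dist, Real.dist_eq]
  exact ENNReal.ofReal_le_ofReal (abs_ecfBranch_sub_le hl ht hs)

lemma continuousOn_ecfBranch {l : List ℤ} (hl : ∀ c ∈ l, 1 ≤ c) :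
    ContinuousOn (ecfBranch l) (Ici 0) := by
  refine ContinuousOn.congr ?_ fun t ht => ecfBranch_eq_div hl ht
  exact ContinuousOn.div (by fun_prop) (by fun_prop) fun t ht => (wordMatrix_den_pos hl ht).ne'

lemma wordMatrix_replicate_one_le (n : ℕ) :
    (wordMatrix (List.replicate n 1) 0 0 + wordMatrix (List.replicate n 1) 0 1 : ℝ) ≤ φ ^ n ∧
      (wordMatrix (List.replicate n 1) 1 0 + wordMatrix (List.replicate n 1) 1 1 : ℝ) ≤
        φ ^ (n + 1) := by
  induction n with
  | zero => simp [wordMatrix, one_lt_goldenRatio.le]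
  | succ n ih =>
    rw [List.replicate_succ, wordMatrix_cons]
    simp only [Matrix.of_apply, Matrix.cons_val_zero, Matrix.cons_val_one]
    push_cast
    exact ⟨ih.2, by linarith [ih.1, ih.2, goldenRatio_pow_sub_goldenRatio_pow n]⟩

lemma ofReal_le_volume_image_ecfBranch_replicate_one (n : ℕ) :
    ENNReal.ofReal ((2 * φ ^ 2)⁻¹ * (φ ^ (2 * n))⁻¹) ≤
      volume (ecfBranch (List.replicate n 1) '' Icc (1 / 4) (3 / 4)) := by
  set l : List ℤ := List.replicate n 1
  have hl : ∀ c ∈ l, 1 ≤ c := fun c hc => (List.eq_of_mem_replicate hc).ge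
  have hprod : (l.prod : ℝ) = 1 := by simp [l]
  obtain ⟨-, -, hC, hD⟩ := wordMatrix_nonneg hl
  have hC : (0 : ℝ) ≤ wordMatrix l 1 0 := by exact_mod_cast hC
  have hD : (1 : ℝ) ≤ wordMatrix l 1 1 := by exact_mod_cast hD
  have hCD := (wordMatrix_replicate_one_le n).2
  have hden : ((wordMatrix l 1 0 : ℝ) * (3 / 4) + wordMatrix l 1 1) *
      (wordMatrix l 1 0 * (1 / 4) + wordMatrix l 1 1) ≤ φ ^ 2 * φ ^ (2 * n) := by
    calc _ ≤ (φ ^ (n + 1)) ^ 2 := by rw [sq]; gcongr <;> linarith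
      _ = φ ^ 2 * φ ^ (2 * n) := by ring
  have hcont : ContinuousOn (ecfBranch l) (uIcc (1 / 4) (3 / 4)) :=
    (continuousOn_ecfBranch hl).mono fun t ht => by
      rw [uIcc_of_le (by norm_num)] at ht
      exact le_trans (by norm_num) ht.1
  calc ENNReal.ofReal ((2 * φ ^ 2)⁻¹ * (φ ^ (2 * n))⁻¹)
      ≤ ENNReal.ofReal |ecfBranch l (3 / 4) - ecfBranch l (1 / 4)| := by
        refine ENNReal.ofReal_le_ofReal ?_
        rw [abs_ecfBranch_sub hl (by norm_num) (by norm_num), hprod, le_div_iff₀ (by positivity)]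
        calc _ ≤ (2 * φ ^ 2)⁻¹ * (φ ^ (2 * n))⁻¹ * (φ ^ 2 * φ ^ (2 * n)) := by gcongr
          _ = 1 * |3 / 4 - 1 / 4| := by field_simp; norm_num [abs_of_pos]
    _ = volume (uIcc (ecfBranch l (1 / 4)) (ecfBranch l (3 / 4))) := Real.volume_interval.symm
    _ ≤ volume (ecfBranch l '' Icc (1 / 4) (3 / 4)) := by
        rw [← uIcc_of_le (by norm_num : (1 / 4 : ℝ) ≤ 3 / 4)]
        exact measure_mono (intermediate_value_uIcc hcont)

lemma irrational_ecfT {x : ℝ} (hx : Irrational x) (hx1 : x ∈ Ioc 0 1) : Irrational (ecfT x) := by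
  have hb : ⌊1 / x⌋ ≠ 0 := by have := one_le_floor_one_div hx1; omega
  rw [ecfT_eq_fract_div, Int.fract]
  exact ((one_div x ▸ hx.inv).sub_intCast _).div_intCast hb

lemma mapsTo_ecfT_irrational :
    MapsTo ecfT {x | Irrational x ∧ x ∈ Ioc 0 1} {x | Irrational x ∧ x ∈ Ioc 0 1} :=
  fun _ ⟨hx, hx1⟩ =>
    have h := irrational_ecfT hx hx1
    have h' := mapsTo_ecfT (Ioc_subset_Icc_self hx1)
    ⟨h, lt_of_le_of_ne h'.1 h.ne_zero.symm, h'.2⟩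

lemma volume_setOf_iterate_ecfT_eq_zero (k : ℕ) :
    volume ({x | ecfT^[k] x = 0} ∩ Ioc 0 1) = 0 := by
  refine measure_mono_null ?_ ((countable_range ((↑) : ℚ → ℝ)).measure_zero volume)
  rintro x ⟨hk, hx⟩
  by_contra hq
  exact (mapsTo_ecfT_irrational.iterate k ⟨hq, hx⟩).1.ne_zero hk

lemma Finset.card_sym_le_multichoose {α : Type*} [DecidableEq α] (s : Finset α) (n : ℕ) :
    (s.sym n).card ≤ s.card.multichoose n := by
  calc (s.sym n).card ≤ ((univ : Finset (Sym s n)).image (Sym.map Subtype.val)).card := by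
        refine card_le_card fun m hm => mem_image.2 ⟨m.attach.map fun a =>
          ⟨a.1, mem_sym_iff.1 hm a.1 a.2⟩, mem_univ _, ?_⟩
        rw [Sym.map_map]
        exact Sym.attach_map_coe m
    _ ≤ Fintype.card (Sym s n) := card_image_le
    _ = s.card.multichoose n := by rw [Sym.card_sym_eq_multichoose, Fintype.card_coe]

lemma setOf_ecfB_eq_one_inter_subset (n : ℕ) :
    {x | ecfB n x = 1} ∩ Ioc 0 1 ⊆ ecfBranch (List.replicate n 1) '' Icc 0 1 := by
  rintro x ⟨hx1, hx⟩
  have hx := Ioc_subset_Icc_self hx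
  have h := ecfDigits_eq_replicate_of_ecfB_eq_one hx hx1
  rw [← h]
  exact mem_image_ecfBranch_ecfDigits hx fun c hc => (List.eq_of_mem_replicate (h ▸ hc)).ge

lemma image_ecfBranch_replicate_one_subset {n : ℕ} (hn : 1 ≤ n) :
    ecfBranch (List.replicate n 1) '' Icc (1 / 4) (3 / 4) ⊆ {x | ecfB n x = 1} ∩ Ioc 0 1 := by
  rintro _ ⟨t, ht, rfl⟩
  obtain ⟨hx, hdig⟩ := ecfBranch_replicate_one (t := t) ⟨by linarith [ht.1], by linarith [ht.2]⟩ n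
  exact ⟨List.eq_of_mem_replicate (hdig ▸ ecfB_mem_ecfDigits hn _), hx.1, hx.2.le⟩

lemma setOf_ecfB_le_inter_subset (n : ℕ) (j : ℤ) :
    {x | ecfB n x ≤ j} ∩ Ioc 0 1 ⊆ ({x | ecfT^[n - 1] x = 0} ∩ Ioc 0 1) ∪
      ⋃ s ∈ (Finset.Icc 1 j).sym n, ecfBranch (s : Multiset ℤ).sort '' Icc 0 1 := by
  rintro x ⟨hxj, hx⟩
  by_cases h0 : ecfT^[n - 1] x = 0
  · exact Or.inl ⟨h0, hx⟩
  have hx' := Ioc_subset_Icc_self hx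
  have hmem := fun c (hc : c ∈ ecfDigits n x) => mem_Icc_of_mem_ecfDigits hx' h0 hc
  refine Or.inr (mem_biUnion (x := ⟨ecfDigits n x, by simp [ecfDigits]⟩) ?_ ?_)
  · exact Finset.mem_sym_iff.2 fun c hc =>
      Finset.mem_Icc.2 ⟨(hmem c hc).1, (hmem c hc).2.trans hxj⟩
  · rw [Sym.coe_mk, Multiset.coe_sort, List.mergeSort_eq_self _ (pairwise_le_ecfDigits hx' h0)]
    exact mem_image_ecfBranch_ecfDigits hx' fun c hc => (hmem c hc).1

lemma volume_setOf_ecfB_le_le (n : ℕ) {j : ℕ} (hj : 1 ≤ j) :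
    volume ({x | ecfB n x ≤ (j : ℤ)} ∩ Ioc 0 1) ≤
      ENNReal.ofReal ((n + j - 1).choose (j - 1) * (φ ^ 2 * (φ ^ (2 * n))⁻¹)) := by
  set W := (Finset.Icc (1 : ℤ) j).sym n
  have hcyl : ∀ s ∈ W, volume (ecfBranch (s : Multiset ℤ).sort '' Icc 0 1) ≤
      ENNReal.ofReal (φ ^ 2 * (φ ^ (2 * n))⁻¹) := fun s hs => by
    have hs := Finset.mem_sym_iff.1 hs
    simpa using volume_image_ecfBranch_le fun c hc =>
      (Finset.mem_Icc.1 (hs c ((Multiset.mem_sort _).1 hc))).1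
  have hcard : W.card ≤ (n + j - 1).choose (j - 1) := by
    refine (Finset.card_sym_le_multichoose _ n).trans_eq ?_
    rw [Int.card_Icc, add_sub_cancel_right, Int.toNat_natCast, Nat.multichoose_eq, add_comm j]
    exact Nat.choose_symm_of_eq_add (by omega)
  calc volume ({x | ecfB n x ≤ (j : ℤ)} ∩ Ioc 0 1)
      ≤ volume ({x | ecfT^[n - 1] x = 0} ∩ Ioc 0 1) +
          volume (⋃ s ∈ W, ecfBranch (s : Multiset ℤ).sort '' Icc 0 1) := by
        have h := measure_mono (μ := volume) (setOf_ecfB_le_inter_subset n j)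
        exact h.trans (measure_union_le _ _)
    _ ≤ 0 + ∑ _s ∈ W, ENNReal.ofReal (φ ^ 2 * (φ ^ (2 * n))⁻¹) := by
        gcongr
        · exact (volume_setOf_iterate_ecfT_eq_zero (n - 1)).le
        · exact (measure_biUnion_finset_le W _).trans (Finset.sum_le_sum hcyl)
    _ ≤ ENNReal.ofReal ((n + j - 1).choose (j - 1) * (φ ^ 2 * (φ ^ (2 * n))⁻¹)) := by
        rw [zero_add, Finset.sum_const, nsmul_eq_mul, ENNReal.ofReal_mul (Nat.cast_nonneg _),
          ENNReal.ofReal_natCast]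
        gcongr

/-- There is a constant `A > 1` such that `A⁻¹ φ^{-2n} ≤ P(b_n = 1) ≤ A φ^{-2n}` and, for
every integer `j > 1`, `P(b_n ≤ j) ≤ A · C(n+j-1, j-1) · φ^{-2n}`, where `φ = (√5+1)/2`. -/
theorem ecf_small_digit_measure :
    ∃ A : ℝ, 1 < A ∧ ∀ n : ℕ, 1 ≤ n →
      (ENNReal.ofReal (A⁻¹ * (((Real.sqrt 5 + 1) / 2) ^ (2 * n))⁻¹) ≤
          ecfP {x | ecfB n x = 1} ∧
        ecfP {x | ecfB n x = 1} ≤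
          ENNReal.ofReal (A * (((Real.sqrt 5 + 1) / 2) ^ (2 * n))⁻¹)) ∧
      ∀ j : ℕ, 1 < j →
        ecfP {x | ecfB n x ≤ (j : ℤ)} ≤
          ENNReal.ofReal (A * (Nat.choose (n + j - 1) (j - 1) : ℝ) *
            (((Real.sqrt 5 + 1) / 2) ^ (2 * n))⁻¹) := by
  have hφ : (√5 + 1) / 2 = φ := by rw [add_comm]
  have hφ2 : φ ^ 2 < 3 := by linarith [goldenRatio_sq, goldenRatio_lt_two]
  refine ⟨6, by norm_num, fun n hn => ⟨⟨?_, ?_⟩, fun j hj => ?_⟩⟩ <;>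
    simp only [hφ, ecfP, Measure.restrict_apply' measurableSet_Ioc]
  · refine le_trans ?_ ((ofReal_le_volume_image_ecfBranch_replicate_one n).trans
      (measure_mono (image_ecfBranch_replicate_one_subset hn)))
    gcongr
    linarith
  · refine (measure_mono (setOf_ecfB_eq_one_inter_subset n)).trans
      ((volume_image_ecfBranch_le fun c hc => (List.eq_of_mem_replicate hc).ge).trans ?_)
    rw [List.length_replicate]
    gcongr
    linarith
  · refine (volume_setOf_ecfB_le_le n hj.le).trans (ENNReal.ofReal_le_ofReal ?_)
    rw [mul_comm 6, mul_assoc]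
    gcongr
    linarith
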